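/- arXiv:2509.23553 — 4 statements merged into one kernel-verified Lean document; each statement's English description precedes it below -/
import Mathlib

section
/- For every ε > 0, the map ζ₂^ε : ℝ³ → ℝ³ defined by ζ₂^ε(x) = x / (1 + ε²‖x‖²) is Lipschitz continuous with Lipschitz constant 1, i.e. ‖ζ₂^ε(x) − ζ₂^ε(y)‖ ≤ ‖x − y‖ for all x, y ∈ ℝ³. -/
lemma zeta2_scalar_aux (t u v ip : ℝ) (ht0 : 0 < t) (hu0 : 0 ≤ u) (hv0 : 0 ≤ v)
    (hipb : ip ≤ u * v) :
    (1 + t * u ^ 2)⁻¹ ^ 2 * u ^ 2 - 2 * ((1 + t * u ^ 2)⁻¹ * (1 + t * v ^ 2)⁻¹) * ip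
      + (1 + t * v ^ 2)⁻¹ ^ 2 * v ^ 2 ≤ u ^ 2 - 2 * ip + v ^ 2 := by
  set a := 1 + t * u ^ 2 with ha
  set b := 1 + t * v ^ 2 with hb
  have ha0 : 0 < a := by positivity
  have hb0 : 0 < b := by positivity
  have hab1 : 1 ≤ a * b := by nlinarith [sq_nonneg u, sq_nonneg v, mul_nonneg (mul_nonneg ht0.le (sq_nonneg u)) (mul_nonneg ht0.le (sq_nonneg v))]
  have hP : 0 ≤ u^2*(a^2-1)*b^2 + v^2*(b^2-1)*a^2 - 2*(u*v)*(a*b-1)*(a*b) := by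
    have key : u^2*(a^2-1)*b^2 + v^2*(b^2-1)*a^2 - 2*(u*v)*(a*b-1)*(a*b) =
        t*(u-v)^2*(2*(u^2+u*v+v^2) + t*(u^4+3*u^2*v^2+v^4)
          + 2*t^2*u^2*v^2*(u^2+v^2) + t^3*u^4*v^4) := by
      rw [ha, hb]; ring
    rw [key]; positivity
  have hprod : 0 ≤ (u * v - ip) * ((a*b-1)*(a*b)) := by
    apply mul_nonneg (by linarith)
    apply mul_nonneg (by linarith) (by positivity)
  have e : a⁻¹ ^ 2 * u ^ 2 - 2 * (a⁻¹ * b⁻¹) * ip + b⁻¹ ^ 2 * v ^ 2 =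
      (u ^ 2 * b ^ 2 - 2 * ip * (a * b) + v ^ 2 * a ^ 2) / (a * b) ^ 2 := by
    field_simp
  rw [e, div_le_iff₀ (by positivity)]
  have hid : (u ^ 2 - 2 * ip + v ^ 2) * (a * b) ^ 2
      - (u ^ 2 * b ^ 2 - 2 * ip * (a * b) + v ^ 2 * a ^ 2) =
      (u^2*(a^2-1)*b^2 + v^2*(b^2-1)*a^2 - 2*(u*v)*(a*b-1)*(a*b))
        + 2 * ((u * v - ip) * ((a*b-1)*(a*b))) := by ring
  linarith [hP, hprod, hid]

noncomputable def zeta2 (ε : ℝ) (x : EuclideanSpace ℝ (Fin 3)) : EuclideanSpace ℝ (Fin 3) :=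
  (1 + ε ^ 2 * ‖x‖ ^ 2)⁻¹ • x

theorem zeta2_lipschitz (ε : ℝ) (hε : 0 < ε) (x y : EuclideanSpace ℝ (Fin 3)) :
    ‖zeta2 ε x - zeta2 ε y‖ ≤ ‖x - y‖ := by
  have ha0 : 0 < 1 + ε ^ 2 * ‖x‖ ^ 2 := by positivity
  have hb0 : 0 < 1 + ε ^ 2 * ‖y‖ ^ 2 := by positivity
  have hsq1 : ‖zeta2 ε x - zeta2 ε y‖ ^ 2 =
      (1 + ε ^ 2 * ‖x‖ ^ 2)⁻¹ ^ 2 * ‖x‖ ^ 2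
        - 2 * ((1 + ε ^ 2 * ‖x‖ ^ 2)⁻¹ * (1 + ε ^ 2 * ‖y‖ ^ 2)⁻¹) * (inner ℝ x y : ℝ)
        + (1 + ε ^ 2 * ‖y‖ ^ 2)⁻¹ ^ 2 * ‖y‖ ^ 2 := by
    rw [zeta2, zeta2, @norm_sub_sq_real, norm_smul, norm_smul,
      real_inner_smul_left, real_inner_smul_right,
      Real.norm_eq_abs, Real.norm_eq_abs, abs_of_pos (inv_pos.mpr ha0),
      abs_of_pos (inv_pos.mpr hb0)]
    ring
  have hsq2 : ‖x - y‖ ^ 2 = ‖x‖ ^ 2 - 2 * (inner ℝ x y : ℝ) + ‖y‖ ^ 2 := by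
    rw [@norm_sub_sq_real]
  have hfin : ‖zeta2 ε x - zeta2 ε y‖ ^ 2 ≤ ‖x - y‖ ^ 2 := by
    rw [hsq1, hsq2]
    exact zeta2_scalar_aux (ε ^ 2) ‖x‖ ‖y‖ _ (by positivity) (norm_nonneg x)
      (norm_nonneg y) (real_inner_le_norm x y)
  exact le_of_pow_le_pow_left₀ two_ne_zero (norm_nonneg _) hfin
end

section
/- For every ε > 0 and every x ∈ ℝ³, one has ‖ζ₃^ε(x) − x‖ ≤ (ε²/3)‖x‖³; that is, the componentwise-arctangent map ζ₃^ε satisfies the calming approximation condition with constant C = 1/3, exponent α = 2 and power β = 3. -/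
open Real

lemma key (t : ℝ) : |Real.arctan t - t| ≤ |t| ^ 3 / 3 := by
  have main : ∀ s : ℝ, 0 ≤ s → |Real.arctan s - s| ≤ s ^ 3 / 3 := by
    intro s hs
    have h1 : ∀ u : ℝ, HasDerivAt (fun v => v ^ 3 / 3 - v + Real.arctan v)
        (u ^ 2 - 1 + 1 / (1 + u ^ 2)) u := by
      intro u
      have := ((hasDerivAt_pow 3 u).div_const 3 |>.sub (hasDerivAt_id u)).add
        (Real.hasDerivAt_arctan u)
      refine this.congr_deriv ?_
      ring_nf
    have h1' : ∀ u : ℝ, HasDerivAt (fun v => v - Real.arctan v)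
        (1 - 1 / (1 + u ^ 2)) u := fun u =>
      (hasDerivAt_id u).sub (Real.hasDerivAt_arctan u)
    have hmono : MonotoneOn (fun v => v ^ 3 / 3 - v + Real.arctan v) (Set.Ici (0:ℝ)) := by
      apply monotoneOn_of_deriv_nonneg (convex_Ici 0)
      · exact Continuous.continuousOn (by continuity)
      · intro u _
        exact (h1 u).differentiableAt.differentiableWithinAt
      · intro u _
        rw [(h1 u).deriv]
        have h2 : (0:ℝ) < 1 + u ^ 2 := by positivity
        have : u ^ 2 - 1 + 1 / (1 + u ^ 2) = u ^ 4 / (1 + u ^ 2) := by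
          field_simp; ring
        rw [this]; positivity
    have hmono' : MonotoneOn (fun v => v - Real.arctan v) (Set.Ici (0:ℝ)) := by
      apply monotoneOn_of_deriv_nonneg (convex_Ici 0)
      · exact Continuous.continuousOn (by continuity)
      · intro u _
        exact (h1' u).differentiableAt.differentiableWithinAt
      · intro u _
        rw [(h1' u).deriv]
        have h2 : (0:ℝ) < 1 + u ^ 2 := by positivity
        have : 1 - 1 / (1 + u ^ 2) = u ^ 2 / (1 + u ^ 2) := by
          field_simp; ring
        rw [this]; positivity
    have hle : Real.arctan s ≤ s := by
      have := hmono' (Set.self_mem_Ici) (Set.mem_Ici.mpr hs) hs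
      simpa [Real.arctan_zero] using this
    have hge : s - s ^ 3 / 3 ≤ Real.arctan s := by
      have := hmono (Set.self_mem_Ici) (Set.mem_Ici.mpr hs) hs
      simp only [Real.arctan_zero] at this
      linarith [this]
    rw [abs_sub_comm, abs_of_nonneg (by linarith)]
    linarith
  rcases le_or_gt 0 t with h | h
  · rw [abs_of_nonneg h]; exact main t h
  · have := main (-t) (by linarith)
    rw [Real.arctan_neg] at this
    rw [abs_of_neg h]
    calc |Real.arctan t - t| = |(-Real.arctan t) - (-t)| := by rw [← abs_neg]; ring_nf
    _ ≤ (-t) ^ 3 / 3 := this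
    _ = (-t) ^ 3 / 3 := rfl

noncomputable def zeta3 (ε : ℝ) (x : EuclideanSpace ℝ (Fin 3)) : EuclideanSpace ℝ (Fin 3) :=
  WithLp.toLp 2 (fun i => (1 / ε) * Real.arctan (ε * x i))

theorem zeta3_approx (ε : ℝ) (hε : 0 < ε) (x : EuclideanSpace ℝ (Fin 3)) :
    ‖zeta3 ε x - x‖ ≤ (ε ^ 2 / 3) * ‖x‖ ^ 3 := by
  set y := zeta3 ε x - x with hy
  have hyi : ∀ i, |y i| ≤ ε ^ 2 / 3 * |x i| ^ 3 := by
    intro i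
    have : y i = (1 / ε) * (Real.arctan (ε * x i) - ε * x i) := by
      simp only [hy]
      have : (zeta3 ε x - x) i = zeta3 ε x i - x i := rfl
      rw [this]
      simp only [zeta3, PiLp.toLp_apply]
      field_simp
    rw [this, abs_mul, abs_of_nonneg (by positivity : (0:ℝ) ≤ 1/ε)]
    calc 1 / ε * |Real.arctan (ε * x i) - ε * x i| ≤ 1 / ε * (|ε * x i| ^ 3 / 3) := by
          gcongr
          exact key (ε * x i)
      _ = ε ^ 2 / 3 * |x i| ^ 3 := by
          rw [abs_mul, abs_of_pos hε]
          field_simp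
  have hS : ‖x‖ ^ 2 = ∑ i, x i ^ 2 := by
    rw [EuclideanSpace.norm_eq, Real.sq_sqrt (by positivity)]
    simp [sq_abs]
  have hsq : ‖y‖ ^ 2 ≤ (ε ^ 2 / 3 * ‖x‖ ^ 3) ^ 2 := by
    have hyn : ‖y‖ ^ 2 = ∑ i, y i ^ 2 := by
      rw [EuclideanSpace.norm_eq, Real.sq_sqrt (by positivity)]
      simp [sq_abs]
    rw [hyn]
    have hstep : ∀ i, y i ^ 2 ≤ (ε ^ 2 / 3) ^ 2 * (x i ^ 2 * (‖x‖ ^ 2) ^ 2) := by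
      intro i
      have h1 : y i ^ 2 ≤ (ε ^ 2 / 3 * |x i| ^ 3) ^ 2 := by
        rw [← sq_abs (y i)]
        exact pow_le_pow_left₀ (abs_nonneg _) (hyi i) 2
      have h2 : x i ^ 2 ≤ ‖x‖ ^ 2 := by
        rw [hS]
        exact Finset.single_le_sum (f := fun j => x j ^ 2)
          (fun j _ => sq_nonneg _) (Finset.mem_univ i)
      calc y i ^ 2 ≤ (ε ^ 2 / 3 * |x i| ^ 3) ^ 2 := h1
        _ = (ε ^ 2 / 3) ^ 2 * (x i ^ 2) ^ 3 := by rw [mul_pow, ← sq_abs (x i)]; ring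
        _ ≤ (ε ^ 2 / 3) ^ 2 * (x i ^ 2 * (‖x‖ ^ 2) ^ 2) := by
            have : (x i ^ 2) ^ 3 ≤ x i ^ 2 * (‖x‖ ^ 2) ^ 2 := by
              calc (x i ^ 2) ^ 3 = x i ^ 2 * (x i ^ 2) ^ 2 := by ring
                _ ≤ x i ^ 2 * (‖x‖ ^ 2) ^ 2 := by
                    apply mul_le_mul_of_nonneg_left _ (sq_nonneg _)
                    exact pow_le_pow_left₀ (sq_nonneg _) h2 2
            exact mul_le_mul_of_nonneg_left this (by positivity)
    calc ∑ i, y i ^ 2 ≤ ∑ i, (ε ^ 2 / 3) ^ 2 * (x i ^ 2 * (‖x‖ ^ 2) ^ 2) :=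
          Finset.sum_le_sum fun i _ => hstep i
      _ = (ε ^ 2 / 3) ^ 2 * ((∑ i, x i ^ 2) * (‖x‖ ^ 2) ^ 2) := by
          rw [← Finset.mul_sum, ← Finset.sum_mul]
      _ = (ε ^ 2 / 3 * ‖x‖ ^ 3) ^ 2 := by rw [← hS]; ring
  have hR : (0:ℝ) ≤ ε ^ 2 / 3 * ‖x‖ ^ 3 := by positivity
  nlinarith [norm_nonneg y, hsq]
end

section
/- Let z : ℝ → ℝ be continuous with z(t)/t → 0 as t → −∞ (sublinear growth at −∞), and let α > 0 and c > 0. Then lim_{t → −∞} e^{c t} ∫_{−∞}^{0} e^{α r} z(r + t)² dr = 0. -/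
open MeasureTheory Filter

/-- Polynomial times exponential tends to zero at `-∞`. -/
lemma tendsto_sq_mul_exp_atBot {b : ℝ} (hb : 0 < b) :
    Tendsto (fun t : ℝ => t ^ 2 * Real.exp (b * t)) atBot (nhds 0) := by
  have h1 := Real.tendsto_pow_mul_exp_neg_atTop_nhds_zero 2
  have h2 : Tendsto (fun t : ℝ => -b * t) atBot atTop := by
    exact tendsto_id.const_mul_atBot_of_neg (neg_neg_iff_pos.2 hb)
  have h3 := (h1.comp h2).const_mul (1 / b ^ 2)
  rw [mul_zero] at h3
  refine h3.congr fun t => ?_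
  have hbne : b ≠ 0 := hb.ne'
  simp only [Function.comp_apply, neg_neg, neg_mul, neg_neg]
  field_simp

/-- Reflection for integrability on `Iic 0`. -/
lemma integrableOn_Iic_of_neg {f : ℝ → ℝ}
    (h : IntegrableOn (fun x => f (-x)) (Set.Ici (0 : ℝ))) :
    IntegrableOn f (Set.Iic (0 : ℝ)) := by
  have h_map_neg : ((volume : Measure ℝ).restrict (Set.Ici (0:ℝ))).map Neg.neg
      = (volume : Measure ℝ).restrict (Set.Iic (0:ℝ)) := by
    conv => rhs; rw [← Measure.map_neg_eq_self (volume : Measure ℝ),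
      measurableEmbedding_neg.restrict_map]
    simp
  rw [IntegrableOn, ← h_map_neg, measurableEmbedding_neg.integrable_map_iff]
  exact h

lemma integrableOn_exp_mul_Iic_zero {b : ℝ} (hb : 0 < b) :
    IntegrableOn (fun x : ℝ => Real.exp (b * x)) (Set.Iic (0 : ℝ)) := by
  apply integrableOn_Iic_of_neg
  have : IntegrableOn (fun x : ℝ => Real.exp (-b * x)) (Set.Ici (0 : ℝ)) := by
    rw [integrableOn_Ici_iff_integrableOn_Ioi]
    exact exp_neg_integrableOn_Ioi 0 hb
  exact this.congr_fun (fun x _ => by ring_nf) measurableSet_Ici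

lemma integrableOn_exp_mul_sq_Iic {b : ℝ} (hb : 0 < b) :
    IntegrableOn (fun x : ℝ => Real.exp (b * x) * x ^ 2) (Set.Iic (0 : ℝ)) := by
  have hcont : Continuous fun x : ℝ => Real.exp (b * x) * x ^ 2 := by
    continuity
  refine LocallyIntegrableOn.integrableOn_of_isBigO_atBot
    (hcont.locallyIntegrable.locallyIntegrableOn _)
    (g := fun x : ℝ => Real.exp (b / 2 * x)) ?_
    ⟨Set.Iic 0, Iic_mem_atBot 0, integrableOn_exp_mul_Iic_zero (by linarith)⟩
  rw [Asymptotics.isBigO_iff]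
  refine ⟨1, ?_⟩
  have hev := (tendsto_sq_mul_exp_atBot (b := b / 2) (by linarith)).eventually
    (eventually_le_nhds (by norm_num : (0:ℝ) < 1))
  filter_upwards [hev] with x hx
  have hsplit : Real.exp (b * x) = Real.exp (b / 2 * x) * Real.exp (b / 2 * x) := by
    rw [← Real.exp_add]; ring_nf
  rw [one_mul, Real.norm_eq_abs, Real.norm_eq_abs, abs_of_nonneg (Real.exp_pos _).le,
    abs_of_nonneg (by positivity)]
  calc Real.exp (b * x) * x ^ 2
      = (x ^ 2 * Real.exp (b / 2 * x)) * Real.exp (b / 2 * x) := by rw [hsplit]; ring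
    _ ≤ 1 * Real.exp (b / 2 * x) := by
        apply mul_le_mul_of_nonneg_right hx (Real.exp_pos _).le
    _ = Real.exp (b / 2 * x) := one_mul _

theorem ou_path_tempered (z : ℝ → ℝ) (hz : Continuous z)
    (hsub : Tendsto (fun t => z t / t) atBot (nhds 0))
    (α : ℝ) (hα : 0 < α) (c : ℝ) (hc : 0 < c) :
    Tendsto (fun t => Real.exp (c * t) * ∫ r in Set.Iic (0 : ℝ),
        Real.exp (α * r) * (z (r + t)) ^ 2) atBot (nhds 0) := by
  -- Step 1: sublinear bound: ∃ M < 0, ∀ s ≤ M, (z s)^2 ≤ s^2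
  have hev : ∀ᶠ s in atBot, |z s / s| < 1 := by
    have := hsub.eventually (eventually_abs_sub_lt 0 (by norm_num : (0:ℝ) < 1))
    simpa using this
  obtain ⟨M₀, hM₀⟩ := eventually_atBot.mp hev
  set M := min M₀ (-1) with hM
  have hMneg : M < 0 := lt_of_le_of_lt (min_le_right _ _) (by norm_num)
  have hzbound : ∀ s ≤ M, (z s) ^ 2 ≤ s ^ 2 := by
    intro s hs
    have hsM0 : s ≤ M₀ := le_trans hs (min_le_left _ _)
    have hsneg : s < 0 := lt_of_le_of_lt hs hMneg
    have h1 : |z s / s| < 1 := hM₀ s hsM0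
    have h2 : |z s| ≤ |s| := by
      rw [abs_div] at h1
      have := (div_lt_one (abs_pos.2 hsneg.ne)).mp h1
      exact this.le
    calc (z s) ^ 2 = |z s| ^ 2 := (sq_abs _).symm
      _ ≤ |s| ^ 2 := by gcongr
      _ = s ^ 2 := sq_abs _
  -- Step 2: squeeze between 0 and an explicit exponential-times-polynomial bound
  set A : ℝ := ∫ r in Set.Iic (0:ℝ), Real.exp (α * r) * r ^ 2 with hA
  set B : ℝ := ∫ r in Set.Iic (0:ℝ), Real.exp (α * r) with hB
  have hupper : Tendsto (fun t : ℝ => Real.exp (c * t) * (2 * A + 2 * t ^ 2 * B))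
      atBot (nhds 0) := by
    have h1 : Tendsto (fun t : ℝ => Real.exp (c * t)) atBot (nhds 0) := by
      refine Real.tendsto_exp_atBot.comp ?_
      exact tendsto_id.const_mul_atBot hc
    have h2 := tendsto_sq_mul_exp_atBot hc
    have h3 := (h1.const_mul (2 * A)).add (h2.const_mul (2 * B))
    rw [mul_zero, mul_zero, add_zero] at h3
    refine h3.congr fun t => ?_
    ring
  refine tendsto_of_tendsto_of_tendsto_of_le_of_le' tendsto_const_nhds hupper ?_ ?_
  · filter_upwards with t
    have : (0:ℝ) ≤ ∫ r in Set.Iic (0:ℝ), Real.exp (α * r) * (z (r + t)) ^ 2 :=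
      integral_nonneg fun r => by positivity
    positivity
  · filter_upwards [Iic_mem_atBot M] with t ht
    have hintA : IntegrableOn (fun r : ℝ => Real.exp (α * r) * r ^ 2) (Set.Iic (0:ℝ)) :=
      integrableOn_exp_mul_sq_Iic hα
    have hintB : IntegrableOn (fun r : ℝ => Real.exp (α * r)) (Set.Iic (0:ℝ)) :=
      integrableOn_exp_mul_Iic_zero hα
    have hdom : IntegrableOn
        (fun r : ℝ => 2 * (Real.exp (α * r) * r ^ 2) + 2 * t ^ 2 * Real.exp (α * r))
        (Set.Iic (0:ℝ)) := (hintA.const_mul 2).add (hintB.const_mul (2 * t ^ 2))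
    have hmono : (∫ r in Set.Iic (0:ℝ), Real.exp (α * r) * (z (r + t)) ^ 2)
        ≤ ∫ r in Set.Iic (0:ℝ),
          (2 * (Real.exp (α * r) * r ^ 2) + 2 * t ^ 2 * Real.exp (α * r)) := by
      refine integral_mono_of_nonneg (Filter.Eventually.of_forall fun r => by positivity)
        hdom ?_
      rw [EventuallyLE, ae_restrict_iff' measurableSet_Iic]
      refine Filter.Eventually.of_forall fun r hr => ?_
      have hr0 : r ≤ 0 := hr
      have hagM : r + t ≤ M := by linarith [Set.mem_Iic.mp ht]
      have hz2 : (z (r + t)) ^ 2 ≤ (r + t) ^ 2 := hzbound _ hagM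
      have hsq : (r + t) ^ 2 ≤ 2 * r ^ 2 + 2 * t ^ 2 := by nlinarith [sq_nonneg (r - t)]
      have hexp : (0:ℝ) < Real.exp (α * r) := Real.exp_pos _
      nlinarith [hexp, hz2, hsq]
    have hval : (∫ r in Set.Iic (0:ℝ),
          (2 * (Real.exp (α * r) * r ^ 2) + 2 * t ^ 2 * Real.exp (α * r)))
        = 2 * A + 2 * t ^ 2 * B := by
      rw [integral_add (hintA.const_mul 2) (hintB.const_mul (2 * t ^ 2)),
        MeasureTheory.integral_const_mul, MeasureTheory.integral_const_mul]
    calc Real.exp (c * t) * ∫ r in Set.Iic (0:ℝ), Real.exp (α * r) * (z (r + t)) ^ 2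
        ≤ Real.exp (c * t) * (2 * A + 2 * t ^ 2 * B) := by
          apply mul_le_mul_of_nonneg_left _ (Real.exp_pos _).le
          rw [← hval]; exact hmono
      _ = Real.exp (c * t) * (2 * A + 2 * t ^ 2 * B) := rfl
end

section
/- Let z : ℝ → ℝ be continuous with z(t)/t → 0 as t → −∞ (sublinear growth at −∞). Then lim_{λ → ∞} ∫_{−∞}^{0} e^{λ s} z(s)² ds = 0. Moreover, for every α > 0 and every λ > α/2, one has the quantitative bound ∫_{−∞}^{0} e^{λ s} z(s)² ds ≤ (2(λ − α/2))^{−1/2} (∫_{−∞}^{0} e^{α s} z(s)⁴ ds)^{1/2}, where the right-hand integral is finite. -/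
open MeasureTheory Filter
open Real Set

lemma intInt_exp_mul {c : ℝ} (hc : c ≠ 0) (a b : ℝ) :
    ∫ x in a..b, Real.exp (c * x) = (Real.exp (c * b) - Real.exp (c * a)) / c := by
  rw [intervalIntegral.integral_comp_mul_left (fun x => Real.exp x) hc, integral_exp]
  field_simp
  rw [smul_eq_mul, ← mul_assoc, mul_one_div_cancel hc, one_mul]

lemma expA {c : ℝ} (hc : 0 < c) :
    IntegrableOn (fun s => Real.exp (c * s)) (Set.Iic 0) ∧
      ∫ s in Set.Iic (0 : ℝ), Real.exp (c * s) = 1 / c := by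
  have hfi : ∀ i : ℝ, IntegrableOn (fun s => Real.exp (c * s)) (Set.Ioc i 0) :=
    fun i => (Real.continuous_exp.comp (continuous_const.mul continuous_id)).integrableOn_Ioc
  have hbound : ∀ i : ℝ, (∫ x in i..(0:ℝ), ‖Real.exp (c * x)‖) ≤ 1 / c := by
    intro i
    have : (∫ x in i..(0:ℝ), ‖Real.exp (c * x)‖) = (∫ x in i..(0:ℝ), Real.exp (c * x)) := by
      simp [Real.norm_eq_abs, Real.abs_exp]
    rw [this, intInt_exp_mul hc.ne']
    rw [div_le_div_iff₀ hc hc]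
    simp only [mul_zero, Real.exp_zero]
    nlinarith [Real.exp_pos (c * i)]
  have hint : IntegrableOn (fun s => Real.exp (c * s)) (Set.Iic 0) :=
    integrableOn_Iic_of_intervalIntegral_norm_bounded (1 / c) 0 hfi tendsto_id
      (Eventually.of_forall hbound)
  refine ⟨hint, ?_⟩
  have h1 := intervalIntegral_tendsto_integral_Iic 0 hint tendsto_id
  have h2 : Tendsto (fun i : ℝ => ∫ x in i..(0:ℝ), Real.exp (c * x)) atBot (nhds (1 / c)) := by
    have : Tendsto (fun i : ℝ => Real.exp (c * i)) atBot (nhds 0) := by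
      apply Real.tendsto_exp_atBot.comp
      exact Tendsto.const_mul_atBot hc tendsto_id
    have h3 : Tendsto (fun i : ℝ => (Real.exp (c * 0) - Real.exp (c * i)) / c) atBot
        (nhds ((Real.exp (c * 0) - 0) / c)) := (tendsto_const_nhds.sub this).div_const c
    simp only [mul_zero, Real.exp_zero, sub_zero] at h3
    refine h3.congr fun i => ?_
    rw [intInt_exp_mul hc.ne' i 0, mul_zero, Real.exp_zero]
  exact tendsto_nhds_unique h1 h2

lemma tendsto_pow_mul_exp_atBot (n : ℕ) {c : ℝ} (hc : 0 < c) :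
    Tendsto (fun s : ℝ => s ^ n * Real.exp (c * s)) atBot (nhds 0) := by
  have h1 : Tendsto (fun s : ℝ => -(c * s)) atBot atTop :=
    tendsto_neg_atBot_atTop.comp (Tendsto.const_mul_atBot hc tendsto_id)
  have h2 := (tendsto_pow_mul_exp_neg_atTop_nhds_zero n).comp h1
  have h3 := h2.const_mul ((-c)⁻¹ ^ n)
  rw [mul_zero] at h3
  refine h3.congr fun s => ?_
  show (-c)⁻¹ ^ n * ((-(c * s)) ^ n * Real.exp (-(-(c * s)))) = s ^ n * Real.exp (c * s)
  rw [neg_neg, show -(c * s) = (-c) * s by ring, mul_pow, ← mul_assoc, ← mul_assoc,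
    ← mul_pow, inv_mul_cancel₀ (by linarith : (-c : ℝ) ≠ 0), one_pow, one_mul]

lemma expB (z : ℝ → ℝ) (hz : Continuous z)
    (hsub : Tendsto (fun t => z t / t) atBot (nhds 0)) {α : ℝ} (hα : 0 < α)
    (n : ℕ) (hn : n ≠ 0) :
    IntegrableOn (fun s => Real.exp (α * s) * z s ^ n) (Set.Iic 0) := by
  have hcont : Continuous (fun s => Real.exp (α * s) * z s ^ n) :=
    (Real.continuous_exp.comp (continuous_const.mul continuous_id)).mul (hz.pow n)
  refine LocallyIntegrableOn.integrableOn_of_isBigO_atBot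
    (hcont.continuousOn.locallyIntegrableOn measurableSet_Iic) (g := fun s => Real.exp (α / 2 * s)) ?_
    ⟨Set.Iic 0, Iic_mem_atBot 0, (expA (half_pos hα)).1⟩
  have htend : Tendsto (fun s => Real.exp (α / 2 * s) * z s ^ n) atBot (nhds 0) := by
    have h1 : Tendsto (fun s => (z s / s) ^ n * (s ^ n * Real.exp (α / 2 * s))) atBot
        (nhds ((0:ℝ) ^ n * 0)) :=
      (hsub.pow n).mul (tendsto_pow_mul_exp_atBot n (half_pos hα))
    rw [zero_pow hn, zero_mul] at h1
    refine (Tendsto.congr' ?_ h1)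
    filter_upwards [eventually_lt_atBot (0:ℝ)] with s hs
    have hs' : s ^ n ≠ 0 := pow_ne_zero n hs.ne
    field_simp
    ring
    rw [mul_assoc, ← mul_pow, mul_inv_cancel₀ hs.ne, one_pow, mul_one]
  rw [Asymptotics.isBigO_iff]
  refine ⟨1, ?_⟩
  have := htend.eventually (eventually_abs_sub_lt 0 one_pos)
  filter_upwards [this] with s hs
  simp only [sub_zero] at hs
  have hexp : (0:ℝ) < Real.exp (α / 2 * s) := Real.exp_pos _
  rw [Real.norm_eq_abs, Real.norm_eq_abs, Real.abs_exp]
  have : |Real.exp (α * s) * z s ^ n| = Real.exp (α / 2 * s) * |Real.exp (α / 2 * s) * z s ^ n| := by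
    rw [abs_mul, Real.abs_exp, abs_mul, Real.abs_exp, ← mul_assoc, ← Real.exp_add]
    ring_nf
  rw [this, one_mul]
  calc Real.exp (α / 2 * s) * |Real.exp (α / 2 * s) * z s ^ n|
      ≤ Real.exp (α / 2 * s) * 1 := by
        exact mul_le_mul_of_nonneg_left hs.le hexp.le
    _ = Real.exp (α / 2 * s) := mul_one _

lemma CSlem (z : ℝ → ℝ) (hz : Continuous z)
    (hsub : Tendsto (fun t => z t / t) atBot (nhds 0)) {α lam : ℝ}
    (hα : 0 < α) (hlam : α / 2 < lam) :
    (∫ s in Set.Iic (0 : ℝ), Real.exp (lam * s) * z s ^ 2)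
      ≤ (2 * (lam - α / 2)) ^ (-(1 / 2 : ℝ)) *
        (∫ s in Set.Iic (0 : ℝ), Real.exp (α * s) * z s ^ 4) ^ (1 / 2 : ℝ) := by
  set μ := volume.restrict (Set.Iic (0 : ℝ)) with hμ
  set f : ℝ → ℝ := fun s => Real.exp ((lam - α / 2) * s) with hf
  set g : ℝ → ℝ := fun s => Real.exp (α / 2 * s) * z s ^ 2 with hg
  have hc : (0 : ℝ) < 2 * (lam - α / 2) := by linarith
  have hf2eq : (fun s => f s ^ 2) = fun s => Real.exp (2 * (lam - α / 2) * s) := by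
    funext s; rw [hf, sq, ← Real.exp_add]; ring_nf
  have hg2eq : (fun s => g s ^ 2) = fun s => Real.exp (α * s) * z s ^ 4 := by
    funext s
    have h2 : Real.exp (α / 2 * s) ^ 2 = Real.exp (α * s) := by
      rw [sq, ← Real.exp_add]; ring_nf
    rw [hg, mul_pow, h2, ← pow_mul]
  have hf2 : Integrable (fun s => f s ^ 2) μ := by rw [hf2eq]; exact (expA hc).1
  have hg2 : Integrable (fun s => g s ^ 2) μ := by rw [hg2eq]; exact expB z hz hsub hα 4 (by norm_num)
  have hfc : Continuous f := Real.continuous_exp.comp (continuous_const.mul continuous_id)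
  have hgc : Continuous g :=
    (Real.continuous_exp.comp (continuous_const.mul continuous_id)).mul (hz.pow 2)
  have hfL : MemLp f (ENNReal.ofReal 2) μ := by
    rw [ENNReal.ofReal_ofNat]
    exact (memLp_two_iff_integrable_sq hfc.aestronglyMeasurable.restrict).mpr hf2
  have hgL : MemLp g (ENNReal.ofReal 2) μ := by
    rw [ENNReal.ofReal_ofNat]
    exact (memLp_two_iff_integrable_sq hgc.aestronglyMeasurable.restrict).mpr hg2
  have hpq : Real.HolderConjugate 2 2 := Real.HolderConjugate.two_two
  have key := integral_mul_le_Lp_mul_Lq_of_nonneg hpq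
    (Eventually.of_forall fun s => (Real.exp_pos _).le)
    (Eventually.of_forall fun s => mul_nonneg (Real.exp_pos _).le (sq_nonneg _)) hfL hgL
  have hfg : (fun s => f s * g s) = fun s => Real.exp (lam * s) * z s ^ 2 := by
    funext s; rw [hf, hg, ← mul_assoc, ← Real.exp_add]; ring_nf
  have hrpow : ∀ h : ℝ → ℝ, (fun a => h a ^ (2 : ℝ)) = fun a => h a ^ 2 := by
    intro h; funext a; rw [show (2:ℝ) = ((2:ℕ):ℝ) by norm_num, Real.rpow_natCast]
  simp only [hrpow] at key
  rw [hfg, hf2eq, hg2eq] at key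
  refine key.trans_eq ?_
  congr 1
  rw [(expA hc).2, one_div, Real.inv_rpow hc.le, ← Real.rpow_neg hc.le]

theorem ou_high_mode_estimate (z : ℝ → ℝ) (hz : Continuous z)
    (hsub : Tendsto (fun t => z t / t) atBot (nhds 0)) :
    Tendsto (fun lam : ℝ => ∫ s in Set.Iic (0 : ℝ), Real.exp (lam * s) * z s ^ 2)
        atTop (nhds 0) ∧
      ∀ α : ℝ, 0 < α → ∀ lam : ℝ, α / 2 < lam →
        IntegrableOn (fun s => Real.exp (α * s) * z s ^ 4) (Set.Iic 0) ∧
          (∫ s in Set.Iic (0 : ℝ), Real.exp (lam * s) * z s ^ 2)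
            ≤ (2 * (lam - α / 2)) ^ (-(1 / 2 : ℝ)) *
              (∫ s in Set.Iic (0 : ℝ), Real.exp (α * s) * z s ^ 4) ^ (1 / 2 : ℝ) := by
  have hI : ∀ lam : ℝ, 0 ≤ ∫ s in Set.Iic (0 : ℝ), Real.exp (lam * s) * z s ^ 2 := fun lam =>
    setIntegral_nonneg measurableSet_Iic fun s _ => mul_nonneg (Real.exp_pos _).le (sq_nonneg _)
  constructor
  · set C := (∫ s in Set.Iic (0 : ℝ), Real.exp ((1:ℝ) * s) * z s ^ 4) ^ (1 / 2 : ℝ) with hC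
    have hbound : ∀ᶠ lam in atTop,
        (∫ s in Set.Iic (0 : ℝ), Real.exp (lam * s) * z s ^ 2)
          ≤ (2 * (lam - 1 / 2)) ^ (-(1 / 2 : ℝ)) * C := by
      filter_upwards [eventually_ge_atTop (1:ℝ)] with lam hlam
      have h := CSlem z hz hsub one_pos (by linarith : (1:ℝ) / 2 < lam)
      rw [hC]
      convert h using 4 <;> norm_num
    have htend : Tendsto (fun lam : ℝ => (2 * (lam - 1 / 2)) ^ (-(1 / 2 : ℝ)) * C)
        atTop (nhds 0) := by
      have h1 : Tendsto (fun lam : ℝ => 2 * (lam - 1 / 2)) atTop atTop := by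
        refine Tendsto.const_mul_atTop two_pos ?_
        exact tendsto_atTop_add_const_right atTop (-(1/2)) tendsto_id |>.congr
          fun x => by simp [id]; ring
      have h2 := (tendsto_rpow_neg_atTop (by norm_num : (0:ℝ) < 1/2)).comp h1
      have h3 := h2.mul_const C
      rw [zero_mul] at h3
      exact h3
    exact squeeze_zero' (Eventually.of_forall hI) hbound htend
  · intro α hα lam hlam
    exact ⟨expB z hz hsub hα 4 (by norm_num), CSlem z hz hsub hα hlam⟩
end
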